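/- For every λ > 3 and σ ∈ ℝ, −F_σ'''(λ) − (3/(2π)) F_σ''(λ) + (3/(4π²)) F_σ'(λ) − (3/(8π³)) F_σ(λ) > 0, where F_σ(λ) = e^{−2λ} ∫_0^∞ (λ e^{−λy}/(2√(y²+4y))) { (y+2+√(y²+4y))^{−(σ−1/2)} + (y+2−√(y²+4y))^{−(σ−1/2)} } dy. -/

import Mathlib

open Real Set MeasureTheory

/-!
Write `F_σ(λ) = λ ∫₀^∞ e^{-λ(y+2)} k_σ(y) dy` with `k_σ > 0` the bracketed kernel divided
by `2√(y²+4y)`. Since `k_σ(y) = O((y+2)^m / √y)`, all moments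
`M_n(λ) = ∫ (y+2)^n e^{-λ(y+2)} k_σ` converge for `λ > 0` and `M_n' = -M_{n+1}`, so
`F^{(j+1)} = (-1)^j ((j+1) M_j - λ M_{j+1})`.
With `a = 3/(2π)` the combination becomes `∫ Q(y+2) e^{-λ(y+2)} k_σ(y) dy` for the cubic
`Q(t) = λ(t³ - at² - a²t/3 - a³/9) - 3t² + 2at + a²/3`, which is positive for `t > 2`
because `a ≤ 1` and `λ ≥ 3`.
-/

noncomputable def Ff (σ lam : ℝ) : ℝ :=
  Real.exp (-2 * lam) *
    ∫ y in Ioi (0 : ℝ),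
      (lam * Real.exp (-lam * y) / (2 * Real.sqrt (y ^ 2 + 4 * y))) *
        ((y + 2 + Real.sqrt (y ^ 2 + 4 * y)) ^ (-(σ - 1 / 2)) +
          (y + 2 - Real.sqrt (y ^ 2 + 4 * y)) ^ (-(σ - 1 / 2)))

theorem setIntegral_pos_of_pos {X : Type*} [MeasurableSpace X] {μ : Measure X} {s : Set X}
    {f : X → ℝ} (hs : MeasurableSet s) (hμ : μ s ≠ 0) (hf : IntegrableOn f s μ)
    (hpos : ∀ x ∈ s, 0 < f x) : 0 < ∫ x in s, f x ∂μ := by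
  rw [setIntegral_pos_iff_support_of_nonneg_ae
    ((ae_restrict_iff' hs).2 (ae_of_all _ fun x hx => (hpos x hx).le)) hf,
    (inter_eq_right (s := Function.support f)).2 fun x hx => (hpos x hx).ne']
  exact pos_iff_ne_zero.2 hμ

section LaplaceMoment

variable {k : ℝ → ℝ}

noncomputable def laplaceMoment (k : ℝ → ℝ) (n : ℕ) (x : ℝ) : ℝ :=
  ∫ y in Ioi 0, (y + 2) ^ n * exp (-(x * (y + 2))) * k y

def HasLaplaceMoments (k : ℝ → ℝ) : Prop :=
  ∀ (n : ℕ) (c : ℝ), 0 < c →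
    IntegrableOn (fun y => (y + 2) ^ n * exp (-(c * (y + 2))) * k y) (Ioi 0)

theorem hasDerivAt_laplaceMoment (hk : HasLaplaceMoments k) (n : ℕ) {x : ℝ} (hx : 0 < x) :
    HasDerivAt (laplaceMoment k n) (-laplaceMoment k (n + 1) x) x := by
  have hball : Metric.ball x (x / 2) ∈ nhds x := Metric.ball_mem_nhds x (half_pos hx)
  have hball_pos : ∀ z ∈ Metric.ball x (x / 2), x / 2 < z := fun z hz => by
    rw [Metric.mem_ball, Real.dist_eq, abs_lt] at hz
    linarith
  have h := hasDerivAt_integral_of_dominated_loc_of_deriv_le (μ := volume.restrict (Ioi 0))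
    (F := fun z y => (y + 2) ^ n * exp (-(z * (y + 2))) * k y)
    (F' := fun z y => -((y + 2) ^ (n + 1) * exp (-(z * (y + 2))) * k y))
    (bound := fun y => ‖(y + 2) ^ (n + 1) * exp (-(x / 2 * (y + 2))) * k y‖) hball
    (Filter.eventually_of_mem hball fun z hz =>
      (hk n z ((half_pos hx).trans (hball_pos z hz))).aestronglyMeasurable)
    (hk n x hx) (hk (n + 1) x hx).aestronglyMeasurable.neg ?_
    (hk (n + 1) (x / 2) (half_pos hx)).norm ?_
  · rw [integral_neg] at h
    exact h.2
  · refine (ae_restrict_iff' measurableSet_Ioi).2 (ae_of_all _ fun y hy z hz => ?_)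
    have ht : 0 < y + 2 := by linarith [mem_Ioi.1 hy]
    rw [norm_neg, norm_mul, norm_mul, norm_mul, norm_mul, Real.norm_of_nonneg (exp_pos _).le,
      Real.norm_of_nonneg (exp_pos _).le]
    gcongr
    exact (hball_pos z hz).le
  · refine ae_of_all _ fun y z _ => ?_
    have h : HasDerivAt (fun z => (y + 2) ^ n * exp (-(z * (y + 2))) * k y)
        ((y + 2) ^ n * (exp (-(z * (y + 2))) * -(1 * (y + 2))) * k y) z :=
      ((((hasDerivAt_id' z).mul_const (y + 2)).neg.exp).const_mul _).mul_const _
    exact h.congr_deriv (by ring)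

theorem iteratedDeriv_succ_mul_laplaceMoment (hk : HasLaplaceMoments k) (j : ℕ) :
    EqOn (iteratedDeriv (j + 1) fun x => x * laplaceMoment k 0 x)
      (fun x => (-1) ^ j * ((j + 1) * laplaceMoment k j x - x * laplaceMoment k (j + 1) x))
      (Ioi 0) := by
  induction j with
  | zero =>
    intro x hx
    have h : HasDerivAt (fun x => x * laplaceMoment k 0 x)
        (1 * laplaceMoment k 0 x + x * -laplaceMoment k 1 x) x :=
      (hasDerivAt_id' x).mul (hasDerivAt_laplaceMoment hk 0 hx)
    rw [iteratedDeriv_one, h.deriv]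
    ring
  | succ j ih =>
    intro x hx
    rw [iteratedDeriv_succ, ih.deriv isOpen_Ioi hx]
    have h : HasDerivAt
        (fun x => (-1) ^ j * ((j + 1) * laplaceMoment k j x - x * laplaceMoment k (j + 1) x))
        ((-1) ^ j * ((j + 1) * -laplaceMoment k (j + 1) x -
          (1 * laplaceMoment k (j + 1) x + x * -laplaceMoment k (j + 2) x))) x :=
      (((hasDerivAt_laplaceMoment hk j hx).const_mul _).sub
        ((hasDerivAt_id' x).mul (hasDerivAt_laplaceMoment hk (j + 1) hx))).const_mul _
    rw [h.deriv]
    push_cast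
    ring

theorem sum_mul_laplaceMoment (hk : HasLaplaceMoments k) {ι : Type*} (s : Finset ι)
    (c : ι → ℝ) (n : ι → ℕ) {x : ℝ} (hx : 0 < x) :
    ∑ i ∈ s, c i * laplaceMoment k (n i) x =
      ∫ y in Ioi 0, (∑ i ∈ s, c i * (y + 2) ^ n i) * exp (-(x * (y + 2))) * k y := by
  simp only [Finset.sum_mul, mul_assoc]
  rw [integral_finsetSum s fun i _ => by
    simpa only [mul_assoc] using (hk (n i) x hx).const_mul (c i)]
  simp only [laplaceMoment, integral_const_mul, mul_assoc]

theorem sum_mul_laplaceMoment_pos (hk : HasLaplaceMoments k) (hk_pos : ∀ y, 0 < y → 0 < k y)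
    {ι : Type*} (s : Finset ι) (c : ι → ℝ) (n : ι → ℕ) {x : ℝ} (hx : 0 < x)
    (hp : ∀ t, 2 < t → 0 < ∑ i ∈ s, c i * t ^ n i) :
    0 < ∑ i ∈ s, c i * laplaceMoment k (n i) x := by
  rw [sum_mul_laplaceMoment hk s c n hx]
  refine setIntegral_pos_of_pos measurableSet_Ioi (by simp) ?_ fun y hy => ?_
  · simp only [Finset.sum_mul]
    exact integrable_finsetSum s fun i _ => by
      simpa only [mul_assoc] using (hk (n i) x hx).const_mul (c i)
  · have hy : 0 < y := hy
    have := hp (y + 2) (by linarith)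
    have := hk_pos y hy
    positivity

end LaplaceMoment

theorem Real.rpow_le_rpow_abs_of_inv_le_of_le {b B : ℝ} (p : ℝ) (hB : 1 ≤ B)
    (hb₁ : B⁻¹ ≤ b) (hb₂ : b ≤ B) : b ^ p ≤ B ^ |p| := by
  have hb : 0 < b := lt_of_lt_of_le (by positivity) hb₁
  rcases le_or_gt 0 p with hp | hp
  · calc b ^ p ≤ B ^ p := rpow_le_rpow hb.le hb₂ hp
      _ ≤ B ^ |p| := rpow_le_rpow_of_exponent_le hB (le_abs_self p)
  · calc b ^ p ≤ B⁻¹ ^ p := rpow_le_rpow_of_nonpos (by positivity) hb₁ hp.le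
      _ = B ^ (-p) := by rw [inv_rpow (by positivity), rpow_neg (by positivity)]
      _ ≤ B ^ |p| := rpow_le_rpow_of_exponent_le hB (neg_le_abs p)

theorem pow_mul_exp_neg_mul_le {t c : ℝ} (ht : 0 ≤ t) (hc : 0 < c) (n : ℕ) :
    t ^ n * exp (-(c * t)) ≤ n.factorial / c ^ n := by
  have h := pow_div_factorial_le_exp _ (mul_nonneg hc.le ht) n
  rw [div_le_iff₀ (by positivity), mul_pow] at h
  rw [le_div_iff₀ (by positivity), exp_neg]
  calc t ^ n * (exp (c * t))⁻¹ * c ^ n = c ^ n * t ^ n * (exp (c * t))⁻¹ := by ring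
    _ ≤ exp (c * t) * n.factorial * (exp (c * t))⁻¹ := by gcongr
    _ = n.factorial := by field_simp

namespace Ff

noncomputable def kernel (σ y : ℝ) : ℝ :=
  ((y + 2 + √(y ^ 2 + 4 * y)) ^ (-(σ - 1 / 2)) +
    (y + 2 - √(y ^ 2 + 4 * y)) ^ (-(σ - 1 / 2))) / (2 * √(y ^ 2 + 4 * y))

theorem eq_mul_laplaceMoment (σ : ℝ) : Ff σ = fun x => x * laplaceMoment (kernel σ) 0 x := by
  funext x
  rw [Ff, laplaceMoment, ← integral_const_mul, ← integral_const_mul]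
  congr 1
  funext y
  rw [kernel, show -(x * (y + 2)) = -x * y + -2 * x by ring, exp_add]
  ring

theorem sqrt_sq_add_four_mul_lt {y : ℝ} (hy : 0 ≤ y) : √(y ^ 2 + 4 * y) < y + 2 := by
  rw [sqrt_lt' (by linarith)]
  linarith

theorem kernel_pos (σ : ℝ) {y : ℝ} (hy : 0 < y) : 0 < kernel σ y := by
  have hs := sqrt_sq_add_four_mul_lt hy.le
  have hs₀ : 0 < √(y ^ 2 + 4 * y) := sqrt_pos.2 (by positivity)
  unfold kernel
  have h₁ : 0 < y + 2 - √(y ^ 2 + 4 * y) := by linarith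
  positivity

theorem kernel_le (σ : ℝ) {y : ℝ} (hy : 0 < y) :
    kernel σ y ≤ (2 * (y + 2)) ^ ⌈|σ - 1 / 2|⌉₊ / √y := by
  set s := √(y ^ 2 + 4 * y)
  set B := 2 * (y + 2)
  have hs : s < y + 2 := sqrt_sq_add_four_mul_lt hy.le
  have hs₀ : 0 < s := sqrt_pos.2 (by positivity)
  have hss : s ^ 2 = y ^ 2 + 4 * y := sq_sqrt (by positivity)
  have hB : 1 ≤ B := by linarith
  have hsy : √y ≤ s := sqrt_le_sqrt (by nlinarith)
  have hceil : B ^ (|σ - 1 / 2|) ≤ B ^ ⌈|σ - 1 / 2|⌉₊ := by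
    rw [← rpow_natCast]
    exact rpow_le_rpow_of_exponent_le hB (Nat.le_ceil _)
  have hbase : ∀ b, B⁻¹ ≤ b → b ≤ B → b ^ (-(σ - 1 / 2)) ≤ B ^ ⌈|σ - 1 / 2|⌉₊ :=
    fun b hb₁ hb₂ =>
      (abs_neg (σ - 1 / 2) ▸ rpow_le_rpow_abs_of_inv_le_of_le _ hB hb₁ hb₂).trans hceil
  -- `(y + 2 + s) * (y + 2 - s) = 4` puts both bases in `[B⁻¹, B]`.
  have hadd := hbase (y + 2 + s)
    (by rw [inv_le_iff_one_le_mul₀ (by positivity)]; nlinarith) (by linarith)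
  have hsub := hbase (y + 2 - s)
    (by rw [inv_le_iff_one_le_mul₀ (by positivity)]; nlinarith) (by linarith)
  calc kernel σ y ≤ 2 * B ^ ⌈|σ - 1 / 2|⌉₊ / (2 * s) := by
        unfold kernel
        gcongr
        linarith
    _ = B ^ ⌈|σ - 1 / 2|⌉₊ / s := by field_simp
    _ ≤ B ^ ⌈|σ - 1 / 2|⌉₊ / √y := by gcongr

theorem measurable_kernel (σ : ℝ) : Measurable (kernel σ) := by
  unfold kernel
  fun_prop

theorem hasLaplaceMoments_kernel (σ : ℝ) : HasLaplaceMoments (kernel σ) := by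
  intro n c hc
  set m := ⌈|σ - 1 / 2|⌉₊
  set C : ℝ := 2 ^ m * ((n + m).factorial / (c / 2) ^ (n + m))
  have hdom := (integrableOn_rpow_mul_exp_neg_mul_rpow (s := -1 / 2) (by norm_num) one_pos
    (half_pos hc)).const_mul C
  refine hdom.mono'
    (((by fun_prop : Measurable fun y : ℝ => (y + 2) ^ n * exp (-(c * (y + 2)))).mul
      (measurable_kernel σ)).aestronglyMeasurable)
    ((ae_restrict_iff' measurableSet_Ioi).2 (ae_of_all _ fun y hy => ?_))
  have hy : 0 < y := hy
  -- Half of the decay `exp (-c (y + 2))` absorbs the polynomial growth, the other half together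
  -- with `1 / √y` is the integrable majorant.
  have hsplit : exp (-(c * (y + 2))) = exp (-(c / 2 * (y + 2))) * exp (-(c / 2 * (y + 2))) := by
    rw [← exp_add]; ring_nf
  have hdecay : exp (-(c / 2 * (y + 2))) ≤ exp (-(c / 2) * y ^ (1 : ℝ)) := by
    rw [rpow_one, exp_le_exp]; nlinarith
  rw [Real.norm_of_nonneg (by have := kernel_pos σ hy; positivity)]
  calc (y + 2) ^ n * exp (-(c * (y + 2))) * kernel σ y
      ≤ (y + 2) ^ n * exp (-(c * (y + 2))) * ((2 * (y + 2)) ^ m / √y) := by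
        gcongr; exact kernel_le σ hy
    _ = 2 ^ m * ((y + 2) ^ (n + m) * exp (-(c / 2 * (y + 2)))) *
          exp (-(c / 2 * (y + 2))) / √y := by
        rw [hsplit, mul_pow, pow_add]; ring
    _ ≤ 2 ^ m * ((n + m).factorial / (c / 2) ^ (n + m)) *
          exp (-(c / 2) * y ^ (1 : ℝ)) / √y := by
        gcongr
        exact pow_mul_exp_neg_mul_le (by linarith) (half_pos hc) _
    _ = C * (y ^ (-1 / 2 : ℝ) * exp (-(c / 2) * y ^ (1 : ℝ))) := by
        rw [show (-1 / 2 : ℝ) = -(1 / 2) by norm_num, rpow_neg hy.le, ← sqrt_eq_rpow]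
        ring

end Ff

theorem cubic_combination_pos {a l t : ℝ} (ha₀ : 0 ≤ a) (ha₁ : a ≤ 1) (hl : 3 ≤ l)
    (ht : 2 < t) :
    0 < l * t ^ 3 - (3 + a * l) * t ^ 2 + (2 * a - a ^ 2 * l / 3) * t +
      (a ^ 2 / 3 - a ^ 3 * l / 9) := by
  have hP : 0 ≤ t ^ 3 - a * t ^ 2 - a ^ 2 / 3 * t - a ^ 3 / 9 := by
    have ha₂ : a ^ 2 ≤ 1 := by nlinarith
    have ha₃ : a ^ 3 ≤ 1 := by nlinarith
    nlinarith [mul_le_mul_of_nonneg_right ha₁ (sq_nonneg t),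
      mul_le_mul_of_nonneg_right ha₂ (show 0 ≤ t by linarith),
      mul_nonneg (sq_nonneg t) (show 0 ≤ t - 2 by linarith)]
  nlinarith [mul_nonneg (sub_nonneg.2 hl) hP, mul_nonneg ha₀ (sub_nonneg.2 ha₁), sq_nonneg t,
    mul_nonneg (mul_nonneg ha₀ ha₀) (sub_nonneg.2 ha₁)]

theorem F_combination_positive (σ lam : ℝ) (hlam : 3 < lam) :
    0 < -iteratedDeriv 3 (Ff σ) lam - 3 / (2 * π) * iteratedDeriv 2 (Ff σ) lam +
        3 / (4 * π ^ 2) * deriv (Ff σ) lam - 3 / (8 * π ^ 3) * Ff σ lam := by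
  have hlam₀ : 0 < lam := by linarith
  set a : ℝ := 3 / (2 * π) with ha
  have ha₀ : 0 ≤ a := by positivity
  have ha₁ : a ≤ 1 := by
    rw [ha, div_le_one (by positivity)]
    linarith [pi_gt_three]
  have ha₂ : 3 / (4 * π ^ 2) = a ^ 2 / 3 := by rw [ha]; field_simp; ring
  have ha₃ : 3 / (8 * π ^ 3) = a ^ 3 / 9 := by rw [ha]; field_simp; ring
  have hk := Ff.hasLaplaceMoments_kernel σ
  have hD := iteratedDeriv_succ_mul_laplaceMoment hk
  have h := sum_mul_laplaceMoment_pos hk (fun y hy => Ff.kernel_pos σ hy) Finset.univ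
    ![lam, -(3 + a * lam), 2 * a - a ^ 2 * lam / 3, a ^ 2 / 3 - a ^ 3 * lam / 9] ![3, 2, 1, 0]
    hlam₀ fun t ht => by
      simp only [Fin.sum_univ_four, Matrix.cons_val_zero, Matrix.cons_val_one, Matrix.cons_val]
      linarith [cubic_combination_pos ha₀ ha₁ hlam.le ht]
  rw [ha₂, ha₃, Ff.eq_mul_laplaceMoment, ← iteratedDeriv_one,
    (hD 0 hlam₀ : iteratedDeriv 1 _ lam = _), (hD 1 hlam₀ : iteratedDeriv 2 _ lam = _),
    (hD 2 hlam₀ : iteratedDeriv 3 _ lam = _)]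
  convert h using 1
  simp only [Fin.sum_univ_four, Matrix.cons_val_zero, Matrix.cons_val_one, Matrix.cons_val]
  push_cast
  ring
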